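/- Let λ, μ, λ̃, μ̃ be real numbers with μ > 0, 3λ + 2μ > 0, μ̃ > 0 and 3λ̃ + 2μ̃ > 0, and let r > 0 be a real number. Define the polynomial p : ℂ → ℂ by p(t) = (μ + μ̃)·r + 2i·(μ²/(λ+3μ) − μ̃²/(λ̃+3μ̃))·t − ((λ+μ)μ/(λ+3μ) + (λ̃+μ̃)μ̃/(λ̃+3μ̃))·r⁻¹·t². Then p(0) ≠ 0, p(i·r) ≠ 0, and p(−i·r) ≠ 0. -/

import Mathlib

/-! At `t = ±i r` the quadratic term turns into `+ r · (…)`, so `p(±i r)` is `r` times a sum of one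
contribution per Lamé pair. Over the common denominator `λ + 3μ` these contributions are
`μ ∓ 2μ²/(λ + 3μ) + (λ + μ)μ/(λ + 3μ) = 2μ(λ + μ)/(λ + 3μ)` or `2μ`, both positive
because admissibility gives `λ + μ > 0` and `λ + 3μ > 0`. -/

section LamePair

variable {lam mu : ℝ}

lemma lame_add_pos (hmu : 0 < mu) (hadm : 0 < 3 * lam + 2 * mu) : 0 < lam + mu := by
  linarith

lemma lame_add_three_mul_pos (hmu : 0 < mu) (hadm : 0 < 3 * lam + 2 * mu) :
    0 < lam + 3 * mu := by
  linarith

lemma lame_contribution_sub_pos (hmu : 0 < mu) (hadm : 0 < 3 * lam + 2 * mu) :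
    0 < mu - 2 * (mu ^ 2 / (lam + 3 * mu)) + (lam + mu) * mu / (lam + 3 * mu) := by
  have hd := (lame_add_three_mul_pos hmu hadm).ne'
  have key : mu - 2 * (mu ^ 2 / (lam + 3 * mu)) + (lam + mu) * mu / (lam + 3 * mu)
      = 2 * mu * (lam + mu) / (lam + 3 * mu) := by
    grind
  rw [key]
  have := lame_add_pos hmu hadm
  have := lame_add_three_mul_pos hmu hadm
  positivity

lemma lame_contribution_add_pos (hmu : 0 < mu) (hadm : 0 < 3 * lam + 2 * mu) :
    0 < mu + 2 * (mu ^ 2 / (lam + 3 * mu)) + (lam + mu) * mu / (lam + 3 * mu) := by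
  have hd := (lame_add_three_mul_pos hmu hadm).ne'
  have key : mu + 2 * (mu ^ 2 / (lam + 3 * mu)) + (lam + mu) * mu / (lam + 3 * mu) = 2 * mu := by
    grind
  rw [key]
  positivity

end LamePair

lemma quadratic_eval_I_mul_ofReal (c a b r s : ℝ) :
    (c : ℂ) + 2 * Complex.I * (a : ℂ) * (Complex.I * s) - (b : ℂ) * ((r⁻¹ : ℝ) : ℂ)
        * (Complex.I * s) ^ 2 = ((c - 2 * a * s + b * (r⁻¹ * s ^ 2) : ℝ) : ℂ) := by
  push_cast
  linear_combination (2 * (a : ℂ) * s - b * (r : ℂ)⁻¹ * s ^ 2) * Complex.I_sq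

/-- Nonvanishing of the eigenvalues of the principal symbol of
`Λ^{λ̃,μ̃,i} − Λ^{λ,μ,e}` (Remark after Proposition 2.10): under admissibility
of both Lamé pairs in dimension 3, the polynomial `p` is nonzero at `0` and at
`± i r`. -/
theorem principal_symbol_eigenvalues_nonzero
    (lam mu lam' mu' r : ℝ)
    (hmu : 0 < mu) (hadm : 0 < 3 * lam + 2 * mu)
    (hmu' : 0 < mu') (hadm' : 0 < 3 * lam' + 2 * mu')
    (hr : 0 < r)
    (p : ℂ → ℂ)
    (hp : ∀ t : ℂ, p t =
      (((mu + mu') * r : ℝ) : ℂ)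
        + 2 * Complex.I *
            ((mu ^ 2 / (lam + 3 * mu) - mu' ^ 2 / (lam' + 3 * mu') : ℝ) : ℂ) * t
        - (((lam + mu) * mu / (lam + 3 * mu)
              + (lam' + mu') * mu' / (lam' + 3 * mu') : ℝ) : ℂ)
            * ((r⁻¹ : ℝ) : ℂ) * t ^ 2) :
    p 0 ≠ 0 ∧ p (Complex.I * (r : ℂ)) ≠ 0 ∧ p (-(Complex.I * (r : ℂ))) ≠ 0 := by
  have hr_inv : r⁻¹ * r ^ 2 = r := by field_simp
  refine ⟨?_, ?_, ?_⟩
  · have h : ((mu + mu') * r : ℝ) ≠ 0 := (mul_pos (add_pos hmu hmu') hr).ne'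
    simpa only [hp, mul_zero, zero_pow two_ne_zero, add_zero, sub_zero, ne_eq,
      Complex.ofReal_eq_zero] using h
  · rw [hp, quadratic_eval_I_mul_ofReal, Complex.ofReal_ne_zero, hr_inv]
    have h := mul_pos hr (add_pos (lame_contribution_sub_pos hmu hadm)
      (lame_contribution_add_pos hmu' hadm'))
    exact (h.trans_eq (by ring)).ne'
  · rw [← mul_neg, ← Complex.ofReal_neg, hp, quadratic_eval_I_mul_ofReal, Complex.ofReal_ne_zero,
      neg_sq, hr_inv]
    have h := mul_pos hr (add_pos (lame_contribution_add_pos hmu hadm)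
      (lame_contribution_sub_pos hmu' hadm'))
    exact (h.trans_eq (by ring)).ne'
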